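/- For a connected d-regular graph G with λ₁(A) < d, the Cheeger constant satisfies h(G) ≥ (d − λ₁(A))/2. -/

import Mathlib

/-!
Test the Rayleigh quotient of `A` on `x = 1_S - (|S| / |V|) • 1`. Its entries sum to zero, so it is
orthogonal to every eigenvector of eigenvalue `d` (on a connected `d`-regular graph these are
constant), and expanding `x` in an orthonormal eigenbasis gives `xᵀ A x ≤ λ₁ ‖x‖²`. On the other
hand `d ‖x‖² - xᵀ A x = xᵀ L x = |∂S|` for the Laplacian `L`, and `‖x‖² = |S| (1 - |S| / |V|)`,
which is at least `|S| / 2`.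
-/

open Matrix Finset
open scoped RealInnerProductSpace

namespace LinearMap.IsSymmetric

variable {E : Type*} [NormedAddCommGroup E] [InnerProductSpace ℝ E] [FiniteDimensional ℝ E]
  {T : E →ₗ[ℝ] E}

theorem inner_map_self_le_of_forall_hasEigenvector (hT : T.IsSymmetric) {c : ℝ} {x : E}
    (hx : ∀ μ v, Module.End.HasEigenvector T μ v → c < μ → ⟪v, x⟫ = 0) :
    ⟪T x, x⟫ ≤ c * ⟪x, x⟫ := by
  set b := hT.eigenvectorBasis rfl
  have hterm (i) : ⟪T x, b i⟫ * ⟪b i, x⟫ ≤ c * (⟪x, b i⟫ * ⟪b i, x⟫) := by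
    have hTb : ⟪T x, b i⟫ = hT.eigenvalues rfl i * ⟪x, b i⟫ := by
      rw [hT, hT.apply_eigenvectorBasis, real_inner_smul_right]; rfl
    rw [hTb, real_inner_comm (b i) x, mul_assoc]
    by_cases hμ : c < hT.eigenvalues rfl i
    · simp [show ⟪b i, x⟫ = 0 from hx _ _ (hT.hasEigenvector_eigenvectorBasis rfl i) hμ]
    · exact mul_le_mul_of_nonneg_right (not_lt.1 hμ) (mul_self_nonneg _)
  rw [← b.sum_inner_mul_inner, ← b.sum_inner_mul_inner, mul_sum]
  exact sum_le_sum fun i _ => hterm i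

end LinearMap.IsSymmetric

theorem Matrix.IsHermitian.dotProduct_mulVec_le_of_forall_eigenvector {n : Type*} [Fintype n]
    [DecidableEq n] {A : Matrix n n ℝ} (hA : A.IsHermitian) {c : ℝ} {x : n → ℝ}
    (hx : ∀ μ v, v ≠ 0 → A *ᵥ v = μ • v → c < μ → v ⬝ᵥ x = 0) :
    x ⬝ᵥ (A *ᵥ x) ≤ c * (x ⬝ᵥ x) := by
  have := (isSymmetric_toEuclideanLin_iff.2 hA).inner_map_self_le_of_forall_hasEigenvector
    (x := WithLp.toLp 2 x) fun μ v hv hμ => by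
      have hAv : A *ᵥ v.ofLp = μ • v.ofLp := by
        simpa using congrArg WithLp.ofLp (Module.End.mem_eigenspace_iff.1 hv.1)
      have hv0 : v.ofLp ≠ 0 := fun h => hv.2 (by simpa using congrArg (WithLp.toLp 2) h)
      simpa [EuclideanSpace.inner_eq_star_dotProduct, dotProduct_comm] using hx μ _ hv0 hAv hμ
  simpa only [EuclideanSpace.inner_toLp_toLp, toLpLin_toLp, toLin'_apply, star_trivial,
    dotProduct_comm] using this

namespace SimpleGraph

variable {V : Type*} [Fintype V] [DecidableEq V] {G : SimpleGraph V} [DecidableRel G.Adj]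
  {R : Type*} [CommRing R]

theorem lapMatrix_mulVec_const (c : R) : G.lapMatrix R *ᵥ (fun _ => c) = 0 := by
  ext v
  simp [lapMatrix_mulVec_apply]

theorem dotProduct_lapMatrix_mulVec_sub_const (x : V → R) (c : R) :
    (x - fun _ => c) ⬝ᵥ (G.lapMatrix R *ᵥ (x - fun _ => c)) = x ⬝ᵥ (G.lapMatrix R *ᵥ x) := by
  have hcL : (fun _ => c) ᵥ* G.lapMatrix R = 0 := by
    rw [← (G.isSymm_lapMatrix R).eq, vecMul_transpose, lapMatrix_mulVec_const]
  rw [mulVec_sub, lapMatrix_mulVec_const, sub_zero, sub_dotProduct, dotProduct_mulVec (fun _ => c),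
    hcL, zero_dotProduct, sub_zero]

theorem indicator_dotProduct_lapMatrix_mulVec_indicator (S : Finset V) :
    (fun v => if v ∈ S then (1 : R) else 0) ⬝ᵥ
        (G.lapMatrix R *ᵥ fun v => if v ∈ S then (1 : R) else 0) =
      #((S ×ˢ Sᶜ).filter fun p => G.Adj p.1 p.2) := by
  have hrow (v : V) (hv : v ∈ S) : (G.lapMatrix R *ᵥ fun v => if v ∈ S then (1 : R) else 0) v =
      ∑ u ∈ Sᶜ, if G.Adj v u then 1 else 0 := by
    rw [lapMatrix_mulVec_apply, ← card_neighborFinset_eq_degree, if_pos hv, mul_one, cast_card,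
      ← sum_sub_distrib, neighborFinset_eq_filter, sum_filter, ← univ_inter Sᶜ, ← sum_ite_mem]
    refine sum_congr rfl fun u _ => ?_
    by_cases hu : u ∈ S <;> simp [hu]
  simp only [dotProduct, ite_mul, one_mul, zero_mul, sum_ite_mem, univ_inter]
  rw [sum_congr rfl hrow, card_filter, Nat.cast_sum, sum_product]
  simp

theorem IsRegularOfDegree.lapMatrix_mulVec {d : ℕ} (hreg : G.IsRegularOfDegree d) (x : V → R) :
    G.lapMatrix R *ᵥ x = (d : R) • x - G.adjMatrix R *ᵥ x := by
  ext v
  simp [lapMatrix, sub_mulVec, degMatrix_mulVec_apply, hreg v]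

theorem Connected.dotProduct_adjMatrix_mulVec_le {d : ℕ} (hconn : G.Connected)
    (hreg : G.IsRegularOfDegree d) {lam : ℝ}
    (hlam : lam ∈ upperBounds
      {μ : ℝ | μ ≠ d ∧ ∃ v : V → ℝ, v ≠ 0 ∧ G.adjMatrix ℝ *ᵥ v = μ • v})
    {x : V → ℝ} (hx : ∑ i, x i = 0) : x ⬝ᵥ (G.adjMatrix ℝ *ᵥ x) ≤ lam * (x ⬝ᵥ x) := by
  refine (G.isHermitian_adjMatrix ℝ).dotProduct_mulVec_le_of_forall_eigenvector
    fun μ v hv hAv hμ => ?_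
  have hμd : μ = d := by
    by_contra hne
    exact not_le.2 hμ (hlam ⟨hne, v, hv, hAv⟩)
  have hconst (i j : V) : v i = v j := by
    refine G.lapMatrix_mulVec_eq_zero_iff_forall_reachable.1 ?_ i j (hconn i j)
    rw [hreg.lapMatrix_mulVec, hAv, hμd, sub_self]
  obtain ⟨i₀, -⟩ := Function.ne_iff.1 hv
  rw [dotProduct, sum_congr rfl fun i _ => by rw [hconst i i₀], ← mul_sum, hx, mul_zero]

end SimpleGraph

theorem cheeger_lower_bound_general
    {V : Type*} [Fintype V] [DecidableEq V] (G : SimpleGraph V) [DecidableRel G.Adj]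
    (hconn : G.Connected) (d : ℕ) (hreg : G.IsRegularOfDegree d)
    (lam1 : ℝ)
    -- `λ₁(A)` is the second-largest eigenvalue of `A` (largest besides the trivial one `d`):
    (hlam1 : IsGreatest {lam : ℝ | lam ≠ (d : ℝ) ∧
      ∃ v : V → ℝ, v ≠ 0 ∧ G.adjMatrix ℝ *ᵥ v = lam • v} lam1) :
    ∀ S : Finset V, S.Nonempty → 2 * S.card ≤ Fintype.card V →
      ((d : ℝ) - lam1) / 2 ≤
        (((S ×ˢ Sᶜ).filter (fun p => G.Adj p.1 p.2)).card : ℝ) / (S.card : ℝ) := by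
  intro S hS hcard
  set χ : V → ℝ := fun v => if v ∈ S then 1 else 0
  set a : ℝ := #S / Fintype.card V
  set x : V → ℝ := χ - fun _ => a
  have hn : (0 : ℝ) < Fintype.card V := by exact_mod_cast hS.card_pos.trans_le (card_le_univ S)
  have hna : Fintype.card V * a = #S := mul_div_cancel₀ _ hn.ne'
  have hsum : ∑ v, x v = 0 := by
    simp [x, χ, sum_sub_distrib, hna]
  have hnorm : x ⬝ᵥ x = #S * (1 - a) := by
    have hterm (v : V) : x v * x v = χ v * (1 - 2 * a) + a ^ 2 := by
      by_cases hv : v ∈ S <;> simp [x, χ, hv] <;> ring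
    simp only [dotProduct, hterm, sum_add_distrib, ← sum_mul]
    simp only [χ, sum_ite_mem, univ_inter, sum_const, nsmul_eq_mul, mul_one, card_univ]
    linear_combination a * hna
  have hbdry : x ⬝ᵥ (G.adjMatrix ℝ *ᵥ x) =
      d * (#S * (1 - a)) - #((S ×ˢ Sᶜ).filter fun p => G.Adj p.1 p.2) := by
    have h := G.dotProduct_lapMatrix_mulVec_sub_const χ a
    rw [G.indicator_dotProduct_lapMatrix_mulVec_indicator, hreg.lapMatrix_mulVec, dotProduct_sub,
      dotProduct_smul, hnorm, smul_eq_mul] at h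
    linarith
  have key := hconn.dotProduct_adjMatrix_mulVec_le hreg hlam1.2 hsum
  have ha : a ≤ 1 / 2 := by
    have : (2 * #S : ℝ) ≤ Fintype.card V := by exact_mod_cast hcard
    rw [div_le_iff₀ hn]; linarith
  rw [hbdry, hnorm] at key
  rw [div_le_div_iff₀ two_pos (by exact_mod_cast hS.card_pos)]
  have hs : (0 : ℝ) ≤ #S := by positivity
  rcases le_total lam1 d with hle | hle
  · nlinarith [mul_nonneg (mul_nonneg (sub_nonneg.2 hle) hs) (by linarith : (0 : ℝ) ≤ 1 / 2 - a)]
  · nlinarith [mul_nonneg (sub_nonneg.2 hle) hs]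

/-- For a connected `d`-regular graph `G` with second-largest adjacency
eigenvalue `λ₁(A) < d`, the Cheeger constant satisfies `h(G) ≥ (d − λ₁(A))/2`, i.e.
every vertex subset `S` with `|S| ≤ |V|/2` has edge boundary of size at least
`(d − λ₁(A))/2 · |S|`. -/
theorem cheeger_lower_bound
    {V : Type*} [Fintype V] [DecidableEq V] (G : SimpleGraph V) [DecidableRel G.Adj]
    (hconn : G.Connected) (d : ℕ) (hreg : G.IsRegularOfDegree d)
    (lam1 : ℝ)
    -- `λ₁(A)` is the second-largest eigenvalue of `A` (largest besides the trivial one `d`):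
    (hlam1 : IsGreatest {lam : ℝ | lam ≠ (d : ℝ) ∧
      ∃ v : V → ℝ, v ≠ 0 ∧ G.adjMatrix ℝ *ᵥ v = lam • v} lam1)
    (hlt : lam1 < (d : ℝ)) :
    ∀ S : Finset V, S.Nonempty → 2 * S.card ≤ Fintype.card V →
      ((d : ℝ) - lam1) / 2 ≤
        (((S ×ˢ Sᶜ).filter (fun p => G.Adj p.1 p.2)).card : ℝ) / (S.card : ℝ) :=
  cheeger_lower_bound_general G hconn d hreg lam1 hlam1
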